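/- arXiv:2311.03174 — 4 statements merged into one kernel-verified Lean document; each statement's English description precedes it below -/
import Mathlib

section
/- Let a, Δ, r : E → ℝ≥0 on a finite set E with m elements, let K ≥ 1, q ≥ 2, T ≥ 3m. Suppose for every e, K^{q-2} r_e² a_e |Δ_e| ≤ K^q and (K²/m) ≤ r_e² a_e² (i.e., a_e ≥ (K/√m)/r_e). Then ∑_e r_e² (a_e + Δ_e/T)² ≤ ∑_e r_e² a_e² + (3/T)·∑_e r_e² a_e Δ_e. -/
open Finset Real

/-
Termwise: the hypotheses give `r² a Δ ≤ K² ≤ m r² a²`, hence `Δ ≤ m a ≤ T a`, so the quadratic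
term of `(a + Δ/T)² = a² + 2aΔ/T + Δ²/T²` is at most `aΔ/T`. Summing over `E` gives the claim.
-/

lemma add_div_sq_le_of_le_mul {a Δ T : ℝ} (hΔ : 0 ≤ Δ) (hT : 0 < T)
    (h : Δ ≤ T * a) : (a + Δ / T) ^ 2 ≤ a ^ 2 + 3 / T * (a * Δ) := by
  have hquad : Δ ^ 2 / T ^ 2 ≤ a * Δ / T := by
    rw [div_le_div_iff₀ (by positivity) hT]
    nlinarith [mul_le_mul_of_nonneg_right h hΔ]
  calc (a + Δ / T) ^ 2 = a ^ 2 + 2 * (a * Δ) / T + Δ ^ 2 / T ^ 2 := by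
        field_simp; ring
    _ ≤ a ^ 2 + 2 * (a * Δ) / T + a * Δ / T := by gcongr
    _ = a ^ 2 + 3 / T * (a * Δ) := by ring

lemma le_sq_of_rpow_sub_two_mul_le {K q x : ℝ} (hK : 0 < K) (h : K ^ (q - 2) * x ≤ K ^ q) :
    x ≤ K ^ 2 := by
  have hsplit : K ^ q = K ^ (q - 2) * K ^ 2 := by
    rw [← rpow_natCast K 2, ← rpow_add hK]; norm_num
  rw [hsplit] at h
  exact le_of_mul_le_mul_left h (rpow_pos_of_pos hK _)

lemma sq_mul_add_div_sq_le {a Δ r K q m T : ℝ} (ha : 0 ≤ a) (hΔ : 0 ≤ Δ) (hK : 0 < K)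
    (hm : 0 < m) (hT : m ≤ T) (hlen : K ^ (q - 2) * r ^ 2 * a * Δ ≤ K ^ q)
    (hlow : K ^ 2 / m ≤ r ^ 2 * a ^ 2) :
    r ^ 2 * (a + Δ / T) ^ 2 ≤ r ^ 2 * a ^ 2 + 3 / T * (r ^ 2 * a * Δ) := by
  have hupper : r ^ 2 * a * Δ ≤ K ^ 2 :=
    le_sq_of_rpow_sub_two_mul_le hK (by simpa only [mul_assoc] using hlen)
  have hlower : K ^ 2 ≤ r ^ 2 * a * (m * a) := by
    rw [div_le_iff₀ hm] at hlow; linarith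
  have hweight : 0 < r ^ 2 * a := by
    refine lt_of_le_of_ne (by positivity) fun h0 => ?_
    have : 0 < K ^ 2 / m := by positivity
    nlinarith [h0]
  have hΔa : Δ ≤ m * a := le_of_mul_le_mul_left (hupper.trans hlower) hweight
  calc r ^ 2 * (a + Δ / T) ^ 2 ≤ r ^ 2 * (a ^ 2 + 3 / T * (a * Δ)) := by
        gcongr
        exact add_div_sq_le_of_le_mul hΔ (hm.trans_le hT)
          (hΔa.trans (mul_le_mul_of_nonneg_right hT ha))
    _ = r ^ 2 * a ^ 2 + 3 / T * (r ^ 2 * a * Δ) := by ring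

theorem stmt_5_general {E : Type*} [Fintype E] (a Δ r : E → ℝ) (K q T : ℝ)
    (ha : ∀ e, 0 ≤ a e) (hΔ : ∀ e, 0 ≤ Δ e)
    (hK : 1 ≤ K) (hT : 3 * (Fintype.card E : ℝ) ≤ T)
    (hlen : ∀ e, K ^ (q - 2) * r e ^ 2 * a e * |Δ e| ≤ K ^ q)
    (hlow : ∀ e, K ^ 2 / (Fintype.card E : ℝ) ≤ r e ^ 2 * a e ^ 2) :
    ∑ e, r e ^ 2 * (a e + Δ e / T) ^ 2 ≤
      (∑ e, r e ^ 2 * a e ^ 2) + (3 / T) * ∑ e, r e ^ 2 * a e * Δ e := by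
  rcases isEmpty_or_nonempty E with _ | _
  · simp
  have hm : (0 : ℝ) < Fintype.card E := by exact_mod_cast Fintype.card_pos
  rw [mul_sum, ← sum_add_distrib]
  gcongr with e
  have hlen' : K ^ (q - 2) * r e ^ 2 * a e * Δ e ≤ K ^ q := by
    simpa only [abs_of_nonneg (hΔ e)] using hlen e
  exact sq_mul_add_div_sq_le (ha e) (hΔ e) (by linarith) hm (by linarith) hlen' (hlow e)

theorem stmt_5 {E : Type*} [Fintype E] (a Δ r : E → ℝ) (K q T : ℝ)
    (ha : ∀ e, 0 ≤ a e) (hΔ : ∀ e, 0 ≤ Δ e) (hr : ∀ e, 0 ≤ r e)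
    (hK : 1 ≤ K) (hq : 2 ≤ q) (hT : 3 * (Fintype.card E : ℝ) ≤ T)
    (hlen : ∀ e, K ^ (q - 2) * r e ^ 2 * a e * |Δ e| ≤ K ^ q)
    (hlow : ∀ e, K ^ 2 / (Fintype.card E : ℝ) ≤ r e ^ 2 * a e ^ 2) :
    ∑ e, r e ^ 2 * (a e + Δ e / T) ^ 2 ≤
      (∑ e, r e ^ 2 * a e ^ 2) + (3 / T) * ∑ e, r e ^ 2 * a e * Δ e :=
  stmt_5_general a Δ r K q T ha hΔ hK hT hlen hlow
end

section
/- Let a, Δ, r : E → ℝ with r_e > 0, a_e > 0, Δ_e ≥ 0 on a finite set E of size m, and let K ≥ 1, q ≥ 2, T ≥ 3m. Define edge lengths ℓ_e = K^{q-2} r_e² a_e and assume ∑_e ℓ_e Δ_e ≤ K^q and a_e ≥ (K/√m)·r_e^{-1} for all e. Then ∑_e r_e²(a_e + Δ_e/T)² ≤ ∑_e r_e² a_e² + 3K²/T. -/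
open Finset Real

theorem stmt_6 {E : Type*} [Fintype E] (a Δ r : E → ℝ) (K q T : ℝ)
    (hr : ∀ e, 0 < r e) (ha : ∀ e, 0 < a e) (hΔ : ∀ e, 0 ≤ Δ e)
    (hK : 1 ≤ K) (hq : 2 ≤ q) (hT : 3 * (Fintype.card E : ℝ) ≤ T)
    (hlen : ∑ e, (K ^ (q - 2) * r e ^ 2 * a e) * Δ e ≤ K ^ q)
    (hlow : ∀ e, (K / Real.sqrt (Fintype.card E : ℝ)) * (r e)⁻¹ ≤ a e) :
    ∑ e, r e ^ 2 * (a e + Δ e / T) ^ 2 ≤ (∑ e, r e ^ 2 * a e ^ 2) + 3 * K ^ 2 / T := by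
  have hK0 : (0:ℝ) < K := lt_of_lt_of_le one_pos hK
  have hP : (0:ℝ) < K ^ (q - 2) := Real.rpow_pos_of_pos hK0 _
  by_cases hE : Fintype.card E = 0
  · have : IsEmpty E := Fintype.card_eq_zero_iff.mp hE
    simp only [Finset.univ_eq_empty, Finset.sum_empty]
    have hT0 : (0:ℝ) ≤ T := by rw [hE] at hT; linarith
    positivity
  · have hm1 : (1:ℝ) ≤ (Fintype.card E : ℝ) := by
      exact_mod_cast Nat.one_le_iff_ne_zero.mpr hE
    have hm0 : (0:ℝ) < (Fintype.card E : ℝ) := by linarith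
    have hT0 : (0:ℝ) < T := by linarith
    -- sum of r^2 a Δ is ≤ K^2
    have hsum : ∑ e, r e ^ 2 * a e * Δ e ≤ K ^ 2 := by
      have h1 : K ^ (q - 2) * ∑ e, r e ^ 2 * a e * Δ e ≤ K ^ (q - 2) * K ^ 2 := by
        have : K ^ q = K ^ (q - 2) * K ^ (2:ℝ) := by
          rw [← Real.rpow_add hK0]; ring_nf
        calc K ^ (q - 2) * ∑ e, r e ^ 2 * a e * Δ e
            = ∑ e, (K ^ (q - 2) * r e ^ 2 * a e) * Δ e := by
              rw [Finset.mul_sum]; congr 1; ext e; ring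
          _ ≤ K ^ q := hlen
          _ = K ^ (q - 2) * K ^ 2 := by
              rw [this]; norm_num [Real.rpow_natCast K 2]
      exact le_of_mul_le_mul_left h1 hP
    -- per edge: Δ e ≤ card * a e
    have hkey : ∀ e, Δ e / T ≤ a e / 3 := by
      intro e
      have hterm : r e ^ 2 * a e * Δ e ≤ K ^ 2 := by
        have h1 : (K ^ (q - 2) * r e ^ 2 * a e) * Δ e ≤ K ^ q := by
          refine le_trans (Finset.single_le_sum (f := fun e => (K ^ (q - 2) * r e ^ 2 * a e) * Δ e) (fun i _ => ?_) (Finset.mem_univ e)) hlen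
          have := hr i; have := ha i; have := hΔ i; positivity
        have h2 : K ^ q = K ^ (q - 2) * K ^ 2 := by
          rw [show q = (q-2) + 2 by ring, Real.rpow_add hK0]
          norm_num [Real.rpow_natCast K 2]
        rw [h2] at h1
        have := le_of_mul_le_mul_left (by linarith [h1] : K ^ (q-2) * (r e ^ 2 * a e * Δ e) ≤ K ^ (q-2) * K ^ 2) hP
        · linarith
      have hra : K / Real.sqrt (Fintype.card E : ℝ) ≤ r e * a e := by
        have h := hlow e
        have hre := hr e
        calc K / Real.sqrt (Fintype.card E : ℝ)
            = (K / Real.sqrt (Fintype.card E : ℝ) * (r e)⁻¹) * r e := by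
              field_simp
          _ ≤ a e * r e := by
              exact mul_le_mul_of_nonneg_right h (le_of_lt hre)
          _ = r e * a e := by ring
      have hsq : K ^ 2 / (Fintype.card E : ℝ) ≤ (r e * a e) ^ 2 := by
        have h0 : 0 ≤ K / Real.sqrt (Fintype.card E : ℝ) :=
          div_nonneg hK0.le (Real.sqrt_nonneg _)
        have := mul_le_mul hra hra h0 (mul_nonneg (hr e).le (ha e).le)
        calc K ^ 2 / (Fintype.card E : ℝ)
            = (K / Real.sqrt (Fintype.card E : ℝ)) * (K / Real.sqrt (Fintype.card E : ℝ)) := by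
              rw [div_mul_div_comm, Real.mul_self_sqrt (le_of_lt hm0)]; ring
          _ ≤ (r e * a e) * (r e * a e) := this
          _ = (r e * a e) ^ 2 := by ring
      -- Δ e * K^2 / card ≤ Δ e * (r a)^2 = (r² a Δ) a ≤ K² a
      have hK2 : (0:ℝ) < K ^ 2 := by positivity
      have hΔm : Δ e ≤ (Fintype.card E : ℝ) * a e := by
        have hsq' : K ^ 2 ≤ (r e * a e) ^ 2 * (Fintype.card E : ℝ) :=
          (div_le_iff₀ hm0).mp hsq
        have hA := mul_le_mul_of_nonneg_left hsq' (hΔ e)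
        have hB := mul_le_mul_of_nonneg_right hterm
          (mul_nonneg (ha e).le hm0.le)
        have hfin : Δ e * K ^ 2 ≤ ((Fintype.card E : ℝ) * a e) * K ^ 2 := by nlinarith
        exact le_of_mul_le_mul_right hfin hK2
      rw [div_le_div_iff₀ hT0 (by norm_num : (0:ℝ) < 3)]
      nlinarith [ha e, hΔ e]
    -- per-edge quadratic bound, then sum
    have hpe : ∀ e, r e ^ 2 * (a e + Δ e / T) ^ 2 ≤ r e ^ 2 * a e ^ 2 + 3 * (r e ^ 2 * a e * Δ e) / T := by
      intro e
      have h1 := hkey e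
      have h2 : 0 ≤ Δ e / T := div_nonneg (hΔ e) (le_of_lt hT0)
      have h3 := ha e
      have h4 := hr e
      have : (a e + Δ e / T) ^ 2 ≤ a e ^ 2 + 3 * a e * (Δ e / T) := by nlinarith
      have h5 : r e ^ 2 * (a e + Δ e / T) ^ 2 ≤ r e ^ 2 * (a e ^ 2 + 3 * a e * (Δ e / T)) :=
        mul_le_mul_of_nonneg_left this (by positivity)
      calc r e ^ 2 * (a e + Δ e / T) ^ 2 ≤ r e ^ 2 * (a e ^ 2 + 3 * a e * (Δ e / T)) := h5
        _ = r e ^ 2 * a e ^ 2 + 3 * (r e ^ 2 * a e * Δ e) / T := by field_simp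
    calc ∑ e, r e ^ 2 * (a e + Δ e / T) ^ 2
        ≤ ∑ e, (r e ^ 2 * a e ^ 2 + 3 * (r e ^ 2 * a e * Δ e) / T) :=
          Finset.sum_le_sum (fun e _ => hpe e)
      _ = (∑ e, r e ^ 2 * a e ^ 2) + (3 / T) * ∑ e, r e ^ 2 * a e * Δ e := by
          rw [Finset.sum_add_distrib, Finset.mul_sum]
          congr 1
          exact Finset.sum_congr rfl fun e _ => by ring
      _ ≤ (∑ e, r e ^ 2 * a e ^ 2) + 3 * K ^ 2 / T := by
          have : (3 / T) * ∑ e, r e ^ 2 * a e * Δ e ≤ (3 / T) * K ^ 2 :=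
            mul_le_mul_of_nonneg_left hsum (by positivity)
          have heq : (3 / T) * K ^ 2 = 3 * K ^ 2 / T := by ring
          linarith [this, heq ▸ this]
end

section
/- Let b, Δ, w : E → ℝ with w_e > 0, b_e > 0, Δ_e ≥ 0 on a finite set E of size m, let K ≥ 1, q ≥ 2 (q real), T ≥ 100 q m. Assume ∑_e w_e^q b_e^{q-1} Δ_e ≤ K^q and b_e ≥ (K/m^{1/q})·w_e^{-1} for all e. Then ∑_e w_e^q (b_e + Δ_e/T)^q ≤ ∑_e w_e^q b_e^q + 4qK^q/T. -/
/-! With `m = card E`, the lower bound on `b e` gives `K ^ q ≤ m (w e b e) ^ q`, and comparing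
with `w e ^ q b e ^ (q - 1) Δ e ≤ K ^ q` yields `Δ e ≤ m b e`. So the step `Δ e / T` is at most
`b e / (100 q)`, small enough that `(b + d) ^ q ≤ b ^ q + 2 q b ^ (q - 1) d`
(from `(1 + x) ^ q ≤ exp (q x) ≤ 1 / (1 - q x)`); summing with weights `w e ^ q` gives the claim. -/

open Finset Real

lemma one_add_rpow_le_one_add_two_mul {q x : ℝ} (hq : 0 ≤ q) (hx : 0 ≤ x)
    (hqx : q * x ≤ 1 / 2) : (1 + x) ^ q ≤ 1 + 2 * q * x :=
  calc (1 + x) ^ q ≤ exp x ^ q := by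
        gcongr
        linarith [add_one_le_exp x]
    _ = exp (q * x) := by rw [← exp_mul, mul_comm]
    _ ≤ 1 / (1 - q * x) := exp_bound_div_one_sub_of_interval (by positivity) (by linarith)
    _ ≤ 1 + 2 * q * x := by
        rw [div_le_iff₀ (by linarith)]
        nlinarith [mul_nonneg (mul_nonneg hq hx) (by linarith : (0 : ℝ) ≤ 1 - 2 * (q * x))]

lemma add_rpow_le_add_two_mul {b d q : ℝ} (hb : 0 < b) (hd : 0 ≤ d) (hq : 0 ≤ q)
    (hqd : q * d ≤ b / 2) : (b + d) ^ q ≤ b ^ q + 2 * q * b ^ (q - 1) * d := by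
  have hx : 0 ≤ d / b := by positivity
  have hqx : q * (d / b) ≤ 1 / 2 := by
    rw [← mul_div_assoc, div_le_iff₀ hb]
    linarith
  calc (b + d) ^ q = b ^ q * (1 + d / b) ^ q := by
        rw [← mul_rpow hb.le (by positivity), mul_add, mul_div_cancel₀ _ hb.ne', mul_one]
    _ ≤ b ^ q * (1 + 2 * q * (d / b)) := by
        gcongr
        exact one_add_rpow_le_one_add_two_mul hq hx hqx
    _ = b ^ q + 2 * q * b ^ (q - 1) * d := by
        rw [rpow_sub hb, rpow_one]
        field_simp

lemma le_mul_of_rpow_mul_le_rpow {w b Δ K q m : ℝ} (hw : 0 < w) (hb : 0 < b) (hK : 0 ≤ K)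
    (hq : 0 < q) (hm : 0 < m) (hlen : w ^ q * b ^ (q - 1) * Δ ≤ K ^ q)
    (hlow : K / m ^ (1 / q) * w⁻¹ ≤ b) : Δ ≤ m * b := by
  have hK_le : K ≤ m ^ (1 / q) * (w * b) := by
    rw [div_mul_eq_mul_div, div_le_iff₀ (by positivity), mul_inv_le_iff₀ hw] at hlow
    linarith
  have hKq : K ^ q ≤ m * (w ^ q * b ^ (q - 1)) * b := by
    calc K ^ q ≤ (m ^ (1 / q) * (w * b)) ^ q := by gcongr
      _ = m * (w ^ q * b ^ (q - 1)) * b := by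
        rw [mul_rpow (by positivity) (by positivity), ← rpow_mul hm.le, one_div_mul_cancel hq.ne',
          rpow_one, mul_rpow hw.le hb.le, rpow_sub hb, rpow_one]
        field_simp
  have hpos : 0 < w ^ q * b ^ (q - 1) := by positivity
  have : (w ^ q * b ^ (q - 1)) * Δ ≤ (w ^ q * b ^ (q - 1)) * (m * b) := by linarith
  exact le_of_mul_le_mul_left this hpos

theorem stmt_7 {E : Type*} [Fintype E] (b Δ w : E → ℝ) (K q T : ℝ)
    (hw : ∀ e, 0 < w e) (hb : ∀ e, 0 < b e) (hΔ : ∀ e, 0 ≤ Δ e)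
    (hK : 1 ≤ K) (hq : 2 ≤ q) (hT : 100 * q * (Fintype.card E : ℝ) ≤ T)
    (hlen : ∑ e, w e ^ q * b e ^ (q - 1) * Δ e ≤ K ^ q)
    (hlow : ∀ e, (K / (Fintype.card E : ℝ) ^ (1 / q)) * (w e)⁻¹ ≤ b e) :
    ∑ e, w e ^ q * (b e + Δ e / T) ^ q ≤ (∑ e, w e ^ q * b e ^ q) + 4 * q * K ^ q / T := by
  set m : ℝ := (Fintype.card E : ℝ)
  have hq0 : 0 ≤ q := by linarith
  have hT0 : 0 ≤ T := le_trans (by positivity) hT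
  have hstep : ∀ e, w e ^ q * (b e + Δ e / T) ^ q ≤
      w e ^ q * b e ^ q + 2 * q / T * (w e ^ q * b e ^ (q - 1) * Δ e) := fun e ↦ by
    have hm : 1 ≤ m := Nat.one_le_cast.mpr (Fintype.card_pos_iff.mpr ⟨e⟩)
    have hterm : w e ^ q * b e ^ (q - 1) * Δ e ≤ K ^ q :=
      (single_le_sum (f := fun i ↦ w i ^ q * b i ^ (q - 1) * Δ i)
        (fun i _ ↦ mul_nonneg (mul_nonneg (rpow_nonneg (hw i).le q) (rpow_nonneg (hb i).le _))
          (hΔ i)) (mem_univ e)).trans hlen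
    have hΔb : Δ e ≤ m * b e :=
      le_mul_of_rpow_mul_le_rpow (hw e) (hb e) (by linarith) (by linarith) (by linarith)
        hterm (hlow e)
    have hqd : q * (Δ e / T) ≤ b e / 2 := by
      rw [← mul_div_assoc, div_le_iff₀ (by nlinarith)]
      nlinarith [hb e, hΔ e]
    calc w e ^ q * (b e + Δ e / T) ^ q
        ≤ w e ^ q * (b e ^ q + 2 * q * b e ^ (q - 1) * (Δ e / T)) :=
          mul_le_mul_of_nonneg_left (add_rpow_le_add_two_mul (hb e) (div_nonneg (hΔ e) hT0) hq0 hqd)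
            (rpow_nonneg (hw e).le q)
      _ = w e ^ q * b e ^ q + 2 * q / T * (w e ^ q * b e ^ (q - 1) * Δ e) := by ring
  calc ∑ e, w e ^ q * (b e + Δ e / T) ^ q
      ≤ ∑ e, w e ^ q * b e ^ q + 2 * q / T * ∑ e, w e ^ q * b e ^ (q - 1) * Δ e := by
        rw [mul_sum, ← sum_add_distrib]
        exact sum_le_sum fun e _ ↦ hstep e
    _ ≤ ∑ e, w e ^ q * b e ^ q + 2 * q / T * K ^ q := by gcongr
    _ ≤ ∑ e, w e ^ q * b e ^ q + 4 * q * K ^ q / T := by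
        have : 0 ≤ q * K ^ q / T := by positivity
        linarith [show 2 * q / T * K ^ q = 2 * (q * K ^ q / T) by ring,
          show 4 * q * K ^ q / T = 4 * (q * K ^ q / T) by ring]
end

section
/- Let E be a finite set of size m, and g, r, w, a, b, c* : E → ℝ with r_e, w_e > 0 and a_e, b_e ≥ 0. Let K ≥ 1, q ≥ 2 real, p ≥ q real. Assume: ‖R a‖₂ ≤ 2K, ‖W b‖_q^q ≤ 5qK^q, ‖R c*‖₂ ≤ 1, ‖W c*‖_p ≤ 1, and m^{1/q - 1/p} ≤ 2. Define ℓ_e = K^{q-2} r_e² a_e + w_e^q b_e^{q-1}. Then ∑_e ℓ_e |c*_e| ≤ 20 q K^{q-1}. -/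
/-!
Split the sum into its two parts. The `r`-part is `K^(q-2)` times an inner product of `R a` and
`R |c*|`, bounded by Cauchy–Schwarz. The `w`-part is `∑ (w b)^(q-1) · |w c*|`, bounded by Hölder
with exponents `q/(q-1)` and `q` by `‖W b‖_q^(q-1) ‖W c*‖_q`; the last factor is converted to
`‖W c*‖_p` through the comparison `‖x‖_q ≤ m^(1/q-1/p) ‖x‖_p` of norms on `m` coordinates.
-/

open Finset Real

namespace Real

variable {ι : Type*} (s : Finset ι)

theorem Lp_le_card_rpow_mul_Lq (f : ι → ℝ) {p q : ℝ} (hp : 0 < p) (hpq : p ≤ q) :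
    (∑ i ∈ s, |f i| ^ p) ^ (1 / p) ≤
      (#s : ℝ) ^ (1 / p - 1 / q) * (∑ i ∈ s, |f i| ^ q) ^ (1 / q) := by
  have hq : 0 < q := hp.trans_le hpq
  have hpow : ∀ i, |(|f i| ^ p)| ^ (q / p) = |f i| ^ q := fun i => by
    rw [abs_of_nonneg (by positivity), ← rpow_mul (abs_nonneg _), mul_div_cancel₀ _ hp.ne']
  have key := rpow_sum_le_const_mul_sum_rpow s (fun i => |f i| ^ p)
    ((one_le_div hp).2 hpq)
  simp only [hpow] at key
  have hSp : 0 ≤ ∑ i ∈ s, |f i| ^ p := sum_nonneg fun i _ => by positivity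
  calc (∑ i ∈ s, |f i| ^ p) ^ (1 / p)
      = ((∑ i ∈ s, |(|f i| ^ p)|) ^ (q / p)) ^ (1 / q) := by
        simp only [abs_of_nonneg (rpow_nonneg (abs_nonneg _) p), ← rpow_mul hSp]
        field_simp
    _ ≤ ((#s : ℝ) ^ (q / p - 1) * ∑ i ∈ s, |f i| ^ q) ^ (1 / q) := by gcongr
    _ = (#s : ℝ) ^ (1 / p - 1 / q) * (∑ i ∈ s, |f i| ^ q) ^ (1 / q) := by
        rw [mul_rpow (by positivity) (sum_nonneg fun i _ => by positivity),
          ← rpow_mul (by positivity)]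
        congr 2
        field_simp

theorem sum_rpow_sub_one_mul_le {u v : ι → ℝ} {q : ℝ} (hq : 1 < q)
    (hu : ∀ i ∈ s, 0 ≤ u i) (hv : ∀ i ∈ s, 0 ≤ v i) :
    ∑ i ∈ s, u i ^ (q - 1) * v i ≤
      (∑ i ∈ s, u i ^ q) ^ ((q - 1) / q) * (∑ i ∈ s, v i ^ q) ^ (1 / q) := by
  have hpow : ∀ i ∈ s, (u i ^ (q - 1)) ^ (q / (q - 1)) = u i ^ q := fun i hi => by
    rw [← rpow_mul (hu i hi), mul_div_cancel₀ _ (sub_ne_zero.2 hq.ne')]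
  have hconj : (q / (q - 1)).HolderConjugate q := (HolderConjugate.conjExponent hq).symm
  have key := inner_le_Lp_mul_Lq_of_nonneg s hconj (fun i hi => rpow_nonneg (hu i hi) (q - 1)) hv
  rwa [sum_congr rfl hpow, one_div_div] at key

end Real

theorem sum_sq_mul_mul_abs_le {ι : Type*} (s : Finset ι) (r a c : ι → ℝ) :
    ∑ i ∈ s, r i ^ 2 * a i * |c i| ≤
      √(∑ i ∈ s, (r i * a i) ^ 2) * √(∑ i ∈ s, (r i * c i) ^ 2) := by
  have hsq : ∀ i, (r i * |c i|) ^ 2 = (r i * c i) ^ 2 := fun i => by rw [mul_pow, mul_pow, sq_abs]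
  calc ∑ i ∈ s, r i ^ 2 * a i * |c i| = ∑ i ∈ s, (r i * a i) * (r i * |c i|) :=
        sum_congr rfl fun i _ => by ring
    _ ≤ _ := by
      simpa only [hsq] using sum_mul_le_sqrt_mul_sqrt s (fun i => r i * a i) fun i => r i * |c i|

theorem sum_rpow_mul_rpow_sub_one_mul_abs_le {ι : Type*} (s : Finset ι) {w b : ι → ℝ}
    (c : ι → ℝ) {q : ℝ} (hq : 1 < q) (hw : ∀ i ∈ s, 0 < w i) (hb : ∀ i ∈ s, 0 ≤ b i) :
    ∑ i ∈ s, w i ^ q * b i ^ (q - 1) * |c i| ≤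
      (∑ i ∈ s, (w i * b i) ^ q) ^ ((q - 1) / q) * (∑ i ∈ s, |w i * c i| ^ q) ^ (1 / q) := by
  have hsplit : ∀ i ∈ s, w i ^ q * b i ^ (q - 1) * |c i| = (w i * b i) ^ (q - 1) * |w i * c i| :=
    fun i hi => by
      have hwi := hw i hi
      rw [mul_rpow hwi.le (hb i hi), abs_mul, abs_of_pos hwi]
      nth_rw 1 [← sub_add_cancel q 1, rpow_add_one hwi.ne']
      ring
  rw [sum_congr rfl hsplit]
  exact Real.sum_rpow_sub_one_mul_le s hq (fun i hi => mul_nonneg (hw i hi).le (hb i hi))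
    fun i _ => abs_nonneg _

theorem mul_rpow_rpow_sub_one_div_le {C K q : ℝ} (hC : 1 ≤ C) (hK : 0 ≤ K) (hq : 1 ≤ q) :
    (C * K ^ q) ^ ((q - 1) / q) ≤ C * K ^ (q - 1) := by
  have hq0 : 0 < q := zero_lt_one.trans_le hq
  rw [mul_rpow (by linarith) (rpow_nonneg hK q), ← rpow_mul hK, mul_div_cancel₀ _ hq0.ne']
  gcongr
  exact rpow_le_self_of_one_le hC ((div_le_one hq0).2 (by linarith))

theorem stmt_8_general {E : Type*} [Fintype E] (r w a b cs : E → ℝ) (K q p : ℝ)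
    (hw : ∀ e, 0 < w e)
    (hb : ∀ e, 0 ≤ b e)
    (hK : 1 ≤ K) (hq : 2 ≤ q) (hpq : q ≤ p)
    (hRa : Real.sqrt (∑ e, (r e * a e) ^ 2) ≤ 2 * K)
    (hWb : ∑ e, (w e * b e) ^ q ≤ 5 * q * K ^ q)
    (hRc : Real.sqrt (∑ e, (r e * cs e) ^ 2) ≤ 1)
    (hWc : (∑ e, |w e * cs e| ^ p) ^ (1 / p) ≤ 1)
    (hm : ((Fintype.card E : ℝ)) ^ (1 / q - 1 / p) ≤ 2) :
    ∑ e, (K ^ (q - 2) * r e ^ 2 * a e + w e ^ q * b e ^ (q - 1)) * |cs e| ≤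
      20 * q * K ^ (q - 1) := by
  have hK0 : 0 < K := zero_lt_one.trans_le hK
  have hq1 : 1 < q := by linarith
  have hKq : 0 < K ^ (q - 1) := rpow_pos_of_pos hK0 _
  have hRterm : ∑ e, K ^ (q - 2) * r e ^ 2 * a e * |cs e| ≤ 2 * K ^ (q - 1) := calc
    _ = K ^ (q - 2) * ∑ e, r e ^ 2 * a e * |cs e| := by
      rw [mul_sum]; exact sum_congr rfl fun e _ => by ring
    _ ≤ K ^ (q - 2) * (2 * K * 1) := by
      gcongr
      exact (sum_sq_mul_mul_abs_le _ r a cs).trans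
        (mul_le_mul hRa hRc (sqrt_nonneg _) (by positivity))
    _ = 2 * K ^ (q - 1) := by
      rw [mul_one, mul_left_comm, ← rpow_add_one hK0.ne']; ring_nf
  have hWcq : (∑ e, |w e * cs e| ^ q) ^ (1 / q) ≤ 2 := by
    refine (Lp_le_card_rpow_mul_Lq _ _ (by linarith) hpq).trans ?_
    rw [card_univ]
    exact (mul_le_mul hm hWc (by positivity) zero_le_two).trans_eq (mul_one 2)
  have hWterm : ∑ e, w e ^ q * b e ^ (q - 1) * |cs e| ≤ 10 * q * K ^ (q - 1) := calc
    _ ≤ (5 * q * K ^ q) ^ ((q - 1) / q) * 2 := by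
      refine (sum_rpow_mul_rpow_sub_one_mul_abs_le _ cs hq1 (fun e _ => hw e)
        fun e _ => hb e).trans ?_
      gcongr
      exact sum_nonneg fun e _ => rpow_nonneg (mul_nonneg (hw e).le (hb e)) q
    _ ≤ 5 * q * K ^ (q - 1) * 2 := by
      gcongr
      exact mul_rpow_rpow_sub_one_div_le (by linarith) hK0.le hq1.le
    _ = 10 * q * K ^ (q - 1) := by ring
  simp only [add_mul, sum_add_distrib]
  nlinarith

theorem stmt_8 {E : Type*} [Fintype E] (g r w a b cs : E → ℝ) (K q p : ℝ)
    (hr : ∀ e, 0 < r e) (hw : ∀ e, 0 < w e)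
    (ha : ∀ e, 0 ≤ a e) (hb : ∀ e, 0 ≤ b e)
    (hK : 1 ≤ K) (hq : 2 ≤ q) (hpq : q ≤ p)
    (hRa : Real.sqrt (∑ e, (r e * a e) ^ 2) ≤ 2 * K)
    (hWb : ∑ e, (w e * b e) ^ q ≤ 5 * q * K ^ q)
    (hRc : Real.sqrt (∑ e, (r e * cs e) ^ 2) ≤ 1)
    (hWc : (∑ e, |w e * cs e| ^ p) ^ (1 / p) ≤ 1)
    (hm : ((Fintype.card E : ℝ)) ^ (1 / q - 1 / p) ≤ 2) :
    ∑ e, (K ^ (q - 2) * r e ^ 2 * a e + w e ^ q * b e ^ (q - 1)) * |cs e| ≤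
      20 * q * K ^ (q - 1) :=
  stmt_8_general r w a b cs K q p hw hb hK hq hpq hRa hWb hRc hWc hm
end
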